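/- arXiv:1812.04504 — 6 statements merged into one kernel-verified Lean document; each statement's English description precedes it below -/
import Mathlib

section
/- Let N be a positive natural number and V = Fin N → ℝ the space of grid functions, equipped with the weighted inner product ⟨f,g⟩ = w · Σ_i f i · g i for a fixed weight w > 0, the pointwise product (f*g) i = f i · g i, and 𝟙 the constant-one grid function. Let Δt ∈ ℝ, let M̄, μ, φⁿ ∈ V with ⟨M̄,𝟙⟩ ≠ 0, set L = ⟨M̄,μ⟩/⟨M̄,𝟙⟩, and define φⁿ⁺¹ = φⁿ - Δt·(M̄*(μ - L·𝟙)). Then ⟨φⁿ⁺¹,𝟙⟩ = ⟨φⁿ,𝟙⟩; i.e. the fully discrete Allen–Cahn schemes with a Lagrange multiplier (both the EQ and SAV versions) conserve the discrete mass (Theorems 4.1 and 4.2 of the paper, fully discrete form). -/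
/-- Theorems 4.1/4.2 (fully discrete): the fully discrete Allen–Cahn schemes
with a Lagrange multiplier conserve the discrete mass. -/
theorem discrete_lagrange_multiplier_step_conserves_mass
    (N : ℕ) (hN : 0 < N) (w : ℝ) (hw : 0 < w)
    (ip : (Fin N → ℝ) → (Fin N → ℝ) → ℝ)
    (hip : ∀ f g, ip f g = w * ∑ i, f i * g i)
    (one : Fin N → ℝ) (hone : one = fun _ => 1)
    (Δt : ℝ) (Mbar mu phin : Fin N → ℝ)
    (hM : ip Mbar one ≠ 0)
    (L : ℝ) (hL : L = ip Mbar mu / ip Mbar one)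
    (phin1 : Fin N → ℝ)
    (hphin1 : phin1 = fun i => phin i - Δt * (Mbar i * (mu i - L * one i))) :
    ip phin1 one = ip phin one := by
  have key : L * ip Mbar one = ip Mbar mu := by
    rw [hL, div_mul_cancel₀ _ hM]
  simp only [hip, hone, hphin1] at *
  rw [show (∑ i, (phin i - Δt * (Mbar i * (mu i - L * 1))) * 1)
      = (∑ i, phin i * 1) - Δt * ((∑ i, Mbar i * mu i) - L * ∑ i, Mbar i * 1) by
    simp only [mul_one, mul_sub, Finset.sum_sub_distrib, Finset.mul_sum]
    ring_nf
    congr 1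
    exact Finset.sum_congr rfl fun i _ => by ring]
  have : (∑ i, Mbar i * mu i) - L * ∑ i, Mbar i * 1 = 0 := by
    have := key
    nlinarith [hw]
  rw [this]
  ring
end

section
/- Let N be a positive natural number and V = Fin N → ℝ with weighted inner product ⟨f,g⟩ = w·Σ_i f i·g i (w > 0), pointwise product *, and constant-one function 𝟙. Let Δh : V →ₗ[ℝ] V be symmetric with respect to ⟨·,·⟩ and set G = Δh∘Δh + 2a·Δh + α·id for real parameters a, α. Let Δt ∈ ℝ, M̄, q̄, φⁿ, φⁿ⁺¹, qⁿ, qⁿ⁺¹ ∈ V with ⟨M̄,𝟙⟩ ≠ 0, and suppose: μ = G((φⁿ + φⁿ⁺¹)/2) + (1/2)·((qⁿ + qⁿ⁺¹)/2)*q̄, L = ⟨M̄,μ⟩/⟨M̄,𝟙⟩, φⁿ⁺¹ - φⁿ = -Δt·(M̄*(μ - L·𝟙)), and qⁿ⁺¹ - qⁿ = q̄*(φⁿ⁺¹ - φⁿ). Define the discrete energy Fᵏ = (1/2)⟨φᵏ, Gφᵏ⟩ + (1/4)⟨qᵏ,qᵏ⟩ for k = n, n+1. Then Fⁿ⁺¹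 - Fⁿ = -Δt·⟨μ - L·𝟙, M̄*(μ - L·𝟙)⟩ (Theorem 4.3 of the paper: discrete energy dissipation law of the fully discrete EQ scheme for the Allen–Cahn model with a Lagrange multiplier). -/
/-!
Because `G` is self-adjoint, the `φ`-part of `Fⁿ⁺¹ - Fⁿ` is `⟨G((φⁿ + φⁿ⁺¹)/2), φⁿ⁺¹ - φⁿ⟩`, and by
the update `qⁿ⁺¹ - qⁿ = q̄ (φⁿ⁺¹ - φⁿ)` the `q`-part is `⟨(qⁿ + qⁿ⁺¹) q̄ / 4, φⁿ⁺¹ - φⁿ⟩`; together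
`Fⁿ⁺¹ - Fⁿ = ⟨μ, φⁿ⁺¹ - φⁿ⟩`. Substituting the `φ`-update, the multiplier `L` is exactly the one
making `M̄` orthogonal to `μ - L𝟙`, so `μ` may be replaced by `μ - L𝟙` in the last pairing.
-/

open LinearMap (BilinForm IsAdjointPair)

namespace LinearMap.BilinForm

variable {R M : Type*} [CommRing R] [AddCommGroup M] [Module R M] {B : BilinForm R M}

theorem IsSymm.apply_self_sub_apply_self (hB : B.IsSymm) (x y : M) :
    B y y - B x x = B (x + y) (y - x) := by
  simp only [map_add, map_sub, LinearMap.add_apply, hB.eq x y]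
  ring

theorem IsSymm.compl₂_of_isAdjointPair (hB : B.IsSymm) {G : Module.End R M}
    (hG : IsAdjointPair B B G G) : IsSymm (B.compl₂ G) :=
  ⟨fun x y => by simp only [compl₂_apply, ← hG y x, hB.eq (G y) x]⟩

theorem IsSymm.apply_map_self_sub_apply_map_self (hB : B.IsSymm) {G : Module.End R M}
    (hG : IsAdjointPair B B G G) (x y : M) :
    B y (G y) - B x (G x) = B (G (x + y)) (y - x) := by
  simpa only [compl₂_apply, hG _ _] using
    (hB.compl₂_of_isAdjointPair hG).apply_self_sub_apply_self x y

end LinearMap.BilinForm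

theorem LinearMap.IsAdjointPair.mul_self_add_smul_add_smul {R M : Type*} [CommRing R]
    [AddCommGroup M] [Module R M] {B : BilinForm R M} {Δ : Module.End R M}
    (hΔ : IsAdjointPair B B Δ Δ) (a α : R) :
    IsAdjointPair B B ⇑(Δ * Δ + a • Δ + α • 1) ⇑(Δ * Δ + a • Δ + α • 1) :=
  ((hΔ.mul hΔ).add (hΔ.smul a)).add (LinearMap.isAdjointPair_one.smul α)

theorem LinearMap.map_sub_div_smul_eq_zero {K V : Type*} [Field K] [AddCommGroup V]
    [Module K V] (ℓ : V →ₗ[K] K) {e : V} (he : ℓ e ≠ 0) (v : V) :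
    ℓ (v - (ℓ v / ℓ e) • e) = 0 := by
  rw [map_sub, map_smul, smul_eq_mul, div_mul_cancel₀ _ he, sub_self]

def weightedDot {ι R : Type*} [Fintype ι] [CommSemiring R] (w : R) : BilinForm R (ι → R) :=
  w • dotProductBilin R R

section weightedDot

variable {ι : Type*} [Fintype ι]

theorem weightedDot_apply {R : Type*} [CommSemiring R] (w : R) (f g : ι → R) :
    weightedDot w f g = w * ∑ i, f i * g i :=
  rfl

theorem isSymm_weightedDot {R : Type*} [CommSemiring R] (w : R) :
    BilinForm.IsSymm (weightedDot w : BilinForm R (ι → R)) :=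
  ⟨fun f g => by simp only [weightedDot_apply, mul_comm (f _)]⟩

theorem weightedDot_mul_right {R : Type*} [CommSemiring R] (w : R) (f g h : ι → R) :
    weightedDot w f (g * h) = weightedDot w (f * g) h := by
  simp only [weightedDot_apply, Pi.mul_apply, mul_assoc]

theorem weightedDot_sub_smul_one_left_eq {K : Type*} [Field K] (w : K) {M μ : ι → K} {L : K}
    (hM : weightedDot w M 1 ≠ 0) (hL : L = weightedDot w M μ / weightedDot w M 1) :
    weightedDot w (μ - L • 1) (M * (μ - L • 1)) = weightedDot w μ (M * (μ - L • 1)) := by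
  have horth : weightedDot w M (μ - L • 1) = 0 :=
    hL ▸ (weightedDot w M).map_sub_div_smul_eq_zero hM μ
  rw [map_sub, LinearMap.sub_apply, map_smul, LinearMap.smul_apply, weightedDot_mul_right w 1,
    one_mul, horth, smul_zero, sub_zero]

noncomputable def quadratizedEnergy {V : Type*} [AddCommGroup V] [Module ℝ V]
    (B : BilinForm ℝ V) (G : V → V) (φ q : V) : ℝ :=
  (1 / 2) * B φ (G φ) + (1 / 4) * B q q

theorem quadratizedEnergy_sub_eq (w : ℝ) {G : Module.End ℝ (ι → ℝ)}
    (hG : IsAdjointPair (weightedDot w) (weightedDot w) G G) {qbar φ₀ φ₁ q₀ q₁ : ι → ℝ}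
    (hq : q₁ - q₀ = qbar * (φ₁ - φ₀)) :
    quadratizedEnergy (weightedDot w) G φ₁ q₁ - quadratizedEnergy (weightedDot w) G φ₀ q₀ =
      weightedDot w (G ((1 / 2 : ℝ) • (φ₀ + φ₁)) +
        (1 / 2 : ℝ) • (((1 / 2 : ℝ) • (q₀ + q₁)) * qbar)) (φ₁ - φ₀) := by
  have hφ := (isSymm_weightedDot w).apply_map_self_sub_apply_map_self hG φ₀ φ₁
  have hq' := (isSymm_weightedDot w).apply_self_sub_apply_self q₀ q₁
  rw [hq, weightedDot_mul_right] at hq'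
  simp only [quadratizedEnergy, map_add, map_smul, LinearMap.add_apply, LinearMap.smul_apply,
    smul_eq_mul, smul_mul_assoc] at hφ hq' ⊢
  linear_combination (1 / 2) * hφ + (1 / 4) * hq'

end weightedDot

theorem discrete_energy_dissipation_AC_Lagrange_EQ_general
    (N : ℕ) (w : ℝ)
    (ip : (Fin N → ℝ) → (Fin N → ℝ) → ℝ)
    (hip : ∀ f g, ip f g = w * ∑ i, f i * g i)
    (one : Fin N → ℝ) (hone : one = fun _ => 1)
    (Δh : (Fin N → ℝ) →ₗ[ℝ] (Fin N → ℝ))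
    (hsym : ∀ f g, ip (Δh f) g = ip f (Δh g))
    (a α : ℝ) (G : (Fin N → ℝ) → (Fin N → ℝ))
    (hG : ∀ f, G f = Δh (Δh f) + (2 * a) • Δh f + α • f)
    (Δt : ℝ) (Mbar qbar phin phin1 qn qn1 mu : Fin N → ℝ)
    (hM : ip Mbar one ≠ 0)
    (hmu : mu = G ((1 / 2 : ℝ) • (phin + phin1)) +
      (1 / 2 : ℝ) • (((1 / 2 : ℝ) • (qn + qn1)) * qbar))
    (L : ℝ) (hL : L = ip Mbar mu / ip Mbar one)
    (hphi : phin1 - phin = (-Δt) • (Mbar * (mu - L • one)))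
    (hq : qn1 - qn = qbar * (phin1 - phin))
    (Fn Fn1 : ℝ)
    (hFn : Fn = (1 / 2) * ip phin (G phin) + (1 / 4) * ip qn qn)
    (hFn1 : Fn1 = (1 / 2) * ip phin1 (G phin1) + (1 / 4) * ip qn1 qn1) :
    Fn1 - Fn = -Δt * ip (mu - L • one) (Mbar * (mu - L • one)) := by
  have hB : ∀ f g, ip f g = weightedDot w f g := hip
  simp only [hB] at hsym hM hL hFn hFn1 ⊢
  obtain rfl : one = 1 := hone
  obtain rfl : G = ⇑(Δh * Δh + (2 * a) • Δh + α • 1) := funext fun f => by simp [hG]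
  have hGsa : IsAdjointPair (weightedDot w) (weightedDot w) _ _ :=
    LinearMap.IsAdjointPair.mul_self_add_smul_add_smul hsym (2 * a) α
  have henergy : Fn1 - Fn = weightedDot w mu (phin1 - phin) := by
    rw [hFn, hFn1, hmu]
    exact quadratizedEnergy_sub_eq w hGsa hq
  rw [henergy, hphi, map_smul, smul_eq_mul, weightedDot_sub_smul_one_left_eq w hM hL]

/-- Theorem 4.3: discrete energy dissipation law of the fully discrete EQ
scheme for the Allen–Cahn model with a Lagrange multiplier. -/
theorem discrete_energy_dissipation_AC_Lagrange_EQ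
    (N : ℕ) (hN : 0 < N) (w : ℝ) (hw : 0 < w)
    (ip : (Fin N → ℝ) → (Fin N → ℝ) → ℝ)
    (hip : ∀ f g, ip f g = w * ∑ i, f i * g i)
    (one : Fin N → ℝ) (hone : one = fun _ => 1)
    (Δh : (Fin N → ℝ) →ₗ[ℝ] (Fin N → ℝ))
    (hsym : ∀ f g, ip (Δh f) g = ip f (Δh g))
    (a α : ℝ) (G : (Fin N → ℝ) → (Fin N → ℝ))
    (hG : ∀ f, G f = Δh (Δh f) + (2 * a) • Δh f + α • f)
    (Δt : ℝ) (Mbar qbar phin phin1 qn qn1 mu : Fin N → ℝ)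
    (hM : ip Mbar one ≠ 0)
    (hmu : mu = G ((1 / 2 : ℝ) • (phin + phin1)) +
      (1 / 2 : ℝ) • (((1 / 2 : ℝ) • (qn + qn1)) * qbar))
    (L : ℝ) (hL : L = ip Mbar mu / ip Mbar one)
    (hphi : phin1 - phin = (-Δt) • (Mbar * (mu - L • one)))
    (hq : qn1 - qn = qbar * (phin1 - phin))
    (Fn Fn1 : ℝ)
    (hFn : Fn = (1 / 2) * ip phin (G phin) + (1 / 4) * ip qn qn)
    (hFn1 : Fn1 = (1 / 2) * ip phin1 (G phin1) + (1 / 4) * ip qn1 qn1) :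
    Fn1 - Fn = -Δt * ip (mu - L • one) (Mbar * (mu - L • one)) :=
  discrete_energy_dissipation_AC_Lagrange_EQ_general N w ip hip one hone Δh hsym a α G hG Δt Mbar
    qbar phin phin1 qn qn1 mu hM hmu L hL hphi hq Fn Fn1 hFn hFn1
end

section
/- In the setting of the fully discrete EQ scheme for the Allen–Cahn model with a Lagrange multiplier (Δh symmetric, G = Δh² + 2a·Δh + α·id, μ = G((φⁿ+φⁿ⁺¹)/2) + (1/2)((qⁿ+qⁿ⁺¹)/2)*q̄, L = ⟨M̄,μ⟩/⟨M̄,𝟙⟩, φⁿ⁺¹-φⁿ = -Δt·(M̄*(μ - L·𝟙)), qⁿ⁺¹-qⁿ = q̄*(φⁿ⁺¹-φⁿ)), assume in addition Δt ≥ 0 and M̄ i ≥ 0 for every index i. Then the discrete energy Fᵏ = (1/2)⟨φᵏ,Gφᵏ⟩ + (1/4)⟨qᵏ,qᵏ⟩ satisfies Fⁿ⁺¹ ≤ Fⁿ; i.e. the scheme is unconditionally energy stable. -/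
/-!
Test the scheme with the increment `d = φⁿ⁺¹ - φⁿ`. Since `G` is self-adjoint and
`qⁿ⁺¹ - qⁿ = q̄ * d`, both halves of `μ` telescope through `⟨T (x + y), y - x⟩ = ⟨y, T y⟩ - ⟨x, T x⟩`,
so `⟨μ, d⟩ = Fⁿ⁺¹ - Fⁿ` exactly. On the other hand `d = -Δt • (M̄ * r)` with `r = μ - L • 𝟙`,
and the multiplier `L` makes `r` orthogonal to `M̄`, so `⟨μ, M̄ * r⟩ = ⟨r, M̄ * r⟩ ≥ 0`.
-/

open LinearMap (BilinForm)
open Matrix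

namespace LinearMap.BilinForm

variable {R M : Type*} [AddCommGroup M]

theorem apply_map_add_sub_of_isSelfAdjoint [CommRing R] [Module R M] {B : BilinForm R M}
    (hB : B.IsSymm) {T : Module.End R M} (hT : B.IsSelfAdjoint T) (x y : M) :
    B (T (x + y)) (y - x) = B y (T y) - B x (T x) := by
  have hcross : B (T x) y = B (T y) x := by rw [hT, hB.eq]
  simp only [map_add, map_sub, LinearMap.add_apply, hcross, hT x x, hT y y]
  ring

theorem apply_sub_div_smul_eq_zero [Field R] [Module R M] (B : BilinForm R M) {m u : M}
    (h : B m u ≠ 0) (v : M) : B m (v - (B m v / B m u) • u) = 0 := by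
  rw [map_sub, map_smul, smul_eq_mul, div_mul_cancel₀ _ h, sub_self]

end LinearMap.BilinForm

section DiscreteInner

variable {ι R : Type*} [Fintype ι]

def discreteInner [CommRing R] (w : R) : BilinForm R (ι → R) := w • dotProductBilin R R

section CommRing

variable [CommRing R] (w : R)

@[simp]
theorem discreteInner_apply (f g : ι → R) : discreteInner w f g = w * (f ⬝ᵥ g) := rfl

theorem discreteInner_isSymm : (discreteInner w : BilinForm R (ι → R)).IsSymm :=
  ⟨fun f g => by simp [dotProduct_comm]⟩

theorem discreteInner_mul_left (m f g : ι → R) :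
    discreteInner w (m * f) g = discreteInner w f (m * g) := by
  simp only [discreteInner_apply, dotProduct, Pi.mul_apply]
  congr 1
  exact Finset.sum_congr rfl fun i _ => by ring

end CommRing

variable [Field R] (w : R)

theorem discreteInner_energy_identity {T : Module.End R (ι → R)}
    (hT : (discreteInner w).IsSelfAdjoint T) {x y q₀ q₁ qbar : ι → R}
    (hq : q₁ - q₀ = qbar * (y - x)) :
    discreteInner w (T ((1 / 2 : R) • (x + y)) + (1 / 2 : R) • (((1 / 2 : R) • (q₀ + q₁)) * qbar))
        (y - x) =
      ((1 / 2) * discreteInner w y (T y) + (1 / 4) * discreteInner w q₁ q₁) -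
        ((1 / 2) * discreteInner w x (T x) + (1 / 4) * discreteInner w q₀ q₀) := by
  have hsymm := discreteInner_isSymm (ι := ι) w
  have hφ := (discreteInner w).apply_map_add_sub_of_isSelfAdjoint hsymm hT x y
  have hq' : discreteInner w ((q₀ + q₁) * qbar) (y - x) =
      discreteInner w q₁ q₁ - discreteInner w q₀ q₀ := by
    rw [mul_comm, discreteInner_mul_left, ← hq]
    simpa using (discreteInner w).apply_map_add_sub_of_isSelfAdjoint hsymm
      LinearMap.isAdjointPair_one q₀ q₁
  simp only [smul_mul_assoc, map_smul, (discreteInner w).map_add, LinearMap.add_apply,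
    LinearMap.smul_apply, smul_eq_mul, hφ, hq']
  have hquarter : (1 / 2 : R) * (1 / 2) = 1 / 4 := by rw [div_mul_div_comm]; norm_num
  linear_combination (discreteInner w q₁ q₁ - discreteInner w q₀ q₀) * hquarter

variable [LinearOrder R] [IsStrictOrderedRing R] {w}

theorem discreteInner_mul_self_nonneg (hw : 0 ≤ w) {m : ι → R} (hm : ∀ i, 0 ≤ m i)
    (r : ι → R) : 0 ≤ discreteInner w r (m * r) := by
  rw [discreteInner_apply, dotProduct]
  exact mul_nonneg hw <| Finset.sum_nonneg fun i _ => by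
    simpa [Pi.mul_apply, mul_left_comm] using mul_nonneg (hm i) (mul_self_nonneg (r i))

theorem discreteInner_lagrange_dissipation_nonneg (hw : 0 ≤ w) {m : ι → R} (hm : ∀ i, 0 ≤ m i)
    (hm₁ : discreteInner w m 1 ≠ 0) (μ : ι → R) :
    0 ≤ discreteInner w μ (m * (μ - (discreteInner w m μ / discreteInner w m 1) • 1)) := by
  set r := μ - (discreteInner w m μ / discreteInner w m 1) • (1 : ι → R) with hr
  have hmr : discreteInner w m r = 0 := (discreteInner w).apply_sub_div_smul_eq_zero hm₁ μ
  have hμr : discreteInner w μ (m * r) = discreteInner w r (m * r) := by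
    have h1 : discreteInner w 1 (m * r) = 0 := by
      rw [← discreteInner_mul_left, mul_one, hmr]
    rw [show μ = r + (discreteInner w m μ / discreteInner w m 1) • 1 by rw [hr, sub_add_cancel],
      map_add, LinearMap.add_apply, map_smul, LinearMap.smul_apply, h1, smul_zero, add_zero]
  rw [hμr]
  exact discreteInner_mul_self_nonneg hw hm r

end DiscreteInner

theorem discrete_energy_stability_AC_Lagrange_EQ_general
    (N : ℕ) (w : ℝ) (hw : 0 < w)
    (ip : (Fin N → ℝ) → (Fin N → ℝ) → ℝ)
    (hip : ∀ f g, ip f g = w * ∑ i, f i * g i)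
    (one : Fin N → ℝ) (hone : one = fun _ => 1)
    (Δh : (Fin N → ℝ) →ₗ[ℝ] (Fin N → ℝ))
    (hsym : ∀ f g, ip (Δh f) g = ip f (Δh g))
    (a α : ℝ) (G : (Fin N → ℝ) → (Fin N → ℝ))
    (hG : ∀ f, G f = Δh (Δh f) + (2 * a) • Δh f + α • f)
    (Δt : ℝ) (hΔt : 0 ≤ Δt) (Mbar qbar phin phin1 qn qn1 mu : Fin N → ℝ)
    (hMpos : ∀ i, 0 ≤ Mbar i)
    (hM : ip Mbar one ≠ 0)
    (hmu : mu = G ((1 / 2 : ℝ) • (phin + phin1)) +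
      (1 / 2 : ℝ) • (((1 / 2 : ℝ) • (qn + qn1)) * qbar))
    (L : ℝ) (hL : L = ip Mbar mu / ip Mbar one)
    (hphi : phin1 - phin = (-Δt) • (Mbar * (mu - L • one)))
    (hq : qn1 - qn = qbar * (phin1 - phin))
    (Fn Fn1 : ℝ)
    (hFn : Fn = (1 / 2) * ip phin (G phin) + (1 / 4) * ip qn qn)
    (hFn1 : Fn1 = (1 / 2) * ip phin1 (G phin1) + (1 / 4) * ip qn1 qn1) :
    Fn1 ≤ Fn := by
  obtain rfl : ip = fun f g => discreteInner w f g := by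
    ext f g
    simp [hip, dotProduct]
  beta_reduce at hsym hM hL hFn hFn1
  subst hL
  obtain rfl : one = 1 := hone
  obtain rfl : G = ⇑(Δh * Δh + (2 * a) • Δh + α • 1 : Module.End ℝ (Fin N → ℝ)) :=
    funext fun f => by simp [hG]
  have hΔh : (discreteInner w).IsSelfAdjoint Δh := hsym
  have hG_selfAdjoint : (discreteInner w).IsSelfAdjoint
      ⇑(Δh * Δh + (2 * a) • Δh + α • 1 : Module.End ℝ (Fin N → ℝ)) :=
    ((hΔh.mul hΔh).add (hΔh.smul _)).add (LinearMap.isAdjointPair_one.smul α)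
  have henergy := discreteInner_energy_identity w hG_selfAdjoint hq
  have hdissipation := discreteInner_lagrange_dissipation_nonneg hw.le hMpos hM mu
  rw [← hmu, ← hFn, ← hFn1, hphi, map_smul, smul_eq_mul] at henergy
  linarith [mul_nonneg hΔt hdissipation]

/-- Unconditional energy stability of the fully discrete EQ
scheme for the Allen–Cahn model with a Lagrange multiplier. -/
theorem discrete_energy_stability_AC_Lagrange_EQ
    (N : ℕ) (hN : 0 < N) (w : ℝ) (hw : 0 < w)
    (ip : (Fin N → ℝ) → (Fin N → ℝ) → ℝ)
    (hip : ∀ f g, ip f g = w * ∑ i, f i * g i)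
    (one : Fin N → ℝ) (hone : one = fun _ => 1)
    (Δh : (Fin N → ℝ) →ₗ[ℝ] (Fin N → ℝ))
    (hsym : ∀ f g, ip (Δh f) g = ip f (Δh g))
    (a α : ℝ) (G : (Fin N → ℝ) → (Fin N → ℝ))
    (hG : ∀ f, G f = Δh (Δh f) + (2 * a) • Δh f + α • f)
    (Δt : ℝ) (hΔt : 0 ≤ Δt) (Mbar qbar phin phin1 qn qn1 mu : Fin N → ℝ)
    (hMpos : ∀ i, 0 ≤ Mbar i)
    (hM : ip Mbar one ≠ 0)
    (hmu : mu = G ((1 / 2 : ℝ) • (phin + phin1)) +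
      (1 / 2 : ℝ) • (((1 / 2 : ℝ) • (qn + qn1)) * qbar))
    (L : ℝ) (hL : L = ip Mbar mu / ip Mbar one)
    (hphi : phin1 - phin = (-Δt) • (Mbar * (mu - L • one)))
    (hq : qn1 - qn = qbar * (phin1 - phin))
    (Fn Fn1 : ℝ)
    (hFn : Fn = (1 / 2) * ip phin (G phin) + (1 / 4) * ip qn qn)
    (hFn1 : Fn1 = (1 / 2) * ip phin1 (G phin1) + (1 / 4) * ip qn1 qn1) :
    Fn1 ≤ Fn :=
  discrete_energy_stability_AC_Lagrange_EQ_general N w hw ip hip one hone Δh hsym a α G hG Δt hΔt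
    Mbar qbar phin phin1 qn qn1 mu hMpos hM hmu L hL hphi hq Fn Fn1 hFn hFn1
end

section
/- Let N be a positive natural number and V = Fin N → ℝ with weighted inner product ⟨f,g⟩ = w·Σ_i f i·g i (w > 0) and pointwise product *. Let Δh : V →ₗ[ℝ] V be symmetric, let a, α, M, Δt be real numbers with M > 0, Δt > 0, let q̄ ∈ V, and define the linear operator A : V → V by Aφ = φ + Δt·M·((1/2)·Δh(Δh φ) + a·Δh φ + (α/2)·φ + (1/4)·(q̄*q̄)*φ). If Δt·M·(a² - α) < 2, then ⟨Aφ, φ⟩ > 0 for every φ ≠ 0; in particular A is injective, hence bijective, so the linear system arising in each time step of the fully discrete scheme admits a unique solution (Theorem 4.4 of the paper). -/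
/-!
Since `Δh` is symmetric, `⟨Δh (Δh φ), φ⟩ = ⟨Δh φ, Δh φ⟩`, and expanding
`0 ≤ ⟨Δh φ + a φ, Δh φ + a φ⟩` gives `a ⟨Δh φ, φ⟩ ≥ -½ ⟨Δh φ, Δh φ⟩ - (a²/2) ⟨φ, φ⟩`.
Together with `⟨(q̄ * q̄) * φ, φ⟩ ≥ 0` this yields
`⟨A φ, φ⟩ ≥ (1 - Δt M (a² - α) / 2) ⟨φ, φ⟩ > 0` for `φ ≠ 0`, so `A` is injective,
hence bijective on the finite-dimensional space of grid functions.
-/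

namespace LinearMap.BilinForm

variable {V : Type*} [AddCommGroup V] [Module ℝ V] (B : LinearMap.BilinForm ℝ V)

theorem neg_half_sub_le_mul_apply_map_self (hB : ∀ x, 0 ≤ B x x) {T : V →ₗ[ℝ] V}
    (hT : ∀ x, B (T x) x = B x (T x)) (a : ℝ) (x : V) :
    -(1 / 2) * B (T x) (T x) - a ^ 2 / 2 * B x x ≤ a * B (T x) x := by
  have hsq := hB (T x + a • x)
  simp only [map_add, map_smul, LinearMap.add_apply, LinearMap.smul_apply, smul_eq_mul,
    ← hT x] at hsq
  linarith

theorem apply_self_pos_of_mul_sub_lt_two (hB : ∀ x, 0 ≤ B x x) {T : V →ₗ[ℝ] V}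
    (hT : ∀ x y, B (T x) y = B x (T y)) {c a α : ℝ} (hc : 0 ≤ c)
    (hsmall : c * (a ^ 2 - α) < 2) {x y : V} (hx : 0 < B x x) (hy : 0 ≤ B y x) :
    0 < B (x + c • ((1 / 2 : ℝ) • T (T x) + a • T x + (α / 2) • x + y)) x := by
  have hest : 0 ≤ 1 / 2 * B (T x) (T x) + a * B (T x) x + a ^ 2 / 2 * B x x := by
    linarith [B.neg_half_sub_le_mul_apply_map_self hB (fun x => hT x x) a x]
  simp only [map_add, map_smul, LinearMap.add_apply, LinearMap.smul_apply, smul_eq_mul,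
    hT (T x) x]
  have hgap : 0 < 2 - c * (a ^ 2 - α) := by linarith
  nlinarith [mul_nonneg hc hest, mul_nonneg hc hy, mul_pos hx hgap]

end LinearMap.BilinForm

theorem LinearMap.injective_of_bilinForm_apply_self_pos {R V : Type*} [CommRing R] [Preorder R]
    [AddCommGroup V] [Module R V] (B : LinearMap.BilinForm R V) {A : V →ₗ[R] V}
    (hA : ∀ x, x ≠ 0 → 0 < B (A x) x) : Function.Injective A := by
  rw [← LinearMap.ker_eq_bot, LinearMap.ker_eq_bot']
  intro x hx
  by_contra hne
  simpa [hx] using hA x hne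

theorem mul_self_mul_dotProduct_nonneg {n R : Type*} [Fintype n] [CommRing R]
    [LinearOrder R] [IsStrictOrderedRing R] (q x : n → R) : 0 ≤ (q * q * x) ⬝ᵥ x :=
  Finset.sum_nonneg fun i _ =>
    (sq_nonneg (q i * x i)).trans_eq (by simp only [Pi.mul_apply]; ring)

theorem unique_solvability_of_scheme_general
    (N : ℕ) (w : ℝ) (hw : 0 < w)
    (ip : (Fin N → ℝ) → (Fin N → ℝ) → ℝ)
    (hip : ∀ f g, ip f g = w * ∑ i, f i * g i)
    (Δh : (Fin N → ℝ) →ₗ[ℝ] (Fin N → ℝ))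
    (hsym : ∀ f g, ip (Δh f) g = ip f (Δh g))
    (a α M Δt : ℝ) (hM : 0 < M) (hΔt : 0 < Δt)
    (qbar : Fin N → ℝ)
    (A : (Fin N → ℝ) →ₗ[ℝ] (Fin N → ℝ))
    (hA : ∀ φ, A φ = φ + (Δt * M) • ((1 / 2 : ℝ) • Δh (Δh φ) + a • Δh φ +
      (α / 2) • φ + (1 / 4 : ℝ) • ((qbar * qbar) * φ)))
    (hsmall : Δt * M * (a ^ 2 - α) < 2) :
    (∀ φ : Fin N → ℝ, φ ≠ 0 → 0 < ip (A φ) φ) ∧ Function.Bijective A := by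
  set B : LinearMap.BilinForm ℝ (Fin N → ℝ) := w • dotProductBilin ℝ ℝ
  have hB : ∀ f g, ip f g = B f g := hip
  have hBapply (f g : Fin N → ℝ) : B f g = w * (f ⬝ᵥ g) := rfl
  have hBnonneg (f : Fin N → ℝ) : 0 ≤ B f f := by
    rw [hBapply]
    exact mul_nonneg hw.le (by simpa using dotProduct_self_star_nonneg f)
  have hBpos (f : Fin N → ℝ) (hf : f ≠ 0) : 0 < B f f := by
    rw [hBapply]
    exact mul_pos hw (by simpa using Matrix.dotProduct_self_star_pos_iff.mpr hf)
  have hpos (φ : Fin N → ℝ) (hφ : φ ≠ 0) : 0 < ip (A φ) φ := by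
    rw [hB, hA]
    refine LinearMap.BilinForm.apply_self_pos_of_mul_sub_lt_two B hBnonneg (fun f g => ?_)
      (mul_pos hΔt hM).le hsmall (hBpos φ hφ) ?_
    · rw [← hB, ← hB, hsym]
    · rw [hBapply, smul_dotProduct]
      exact mul_nonneg hw.le
        (smul_nonneg (by norm_num) (mul_self_mul_dotProduct_nonneg qbar φ))
  have hinj : Function.Injective A :=
    LinearMap.injective_of_bilinForm_apply_self_pos B fun φ hφ => hB (A φ) φ ▸ hpos φ hφ
  exact ⟨hpos, hinj, LinearMap.injective_iff_surjective.mp hinj⟩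

/-- Theorem 4.4: unique solvability of the linear system arising at each time
step of the fully discrete scheme (positive definiteness of the coefficient
operator `A` under the smallness condition `Δt·M·(a² - α) < 2`). -/
theorem unique_solvability_of_scheme
    (N : ℕ) (hN : 0 < N) (w : ℝ) (hw : 0 < w)
    (ip : (Fin N → ℝ) → (Fin N → ℝ) → ℝ)
    (hip : ∀ f g, ip f g = w * ∑ i, f i * g i)
    (Δh : (Fin N → ℝ) →ₗ[ℝ] (Fin N → ℝ))
    (hsym : ∀ f g, ip (Δh f) g = ip f (Δh g))
    (a α M Δt : ℝ) (hM : 0 < M) (hΔt : 0 < Δt)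
    (qbar : Fin N → ℝ)
    (A : (Fin N → ℝ) →ₗ[ℝ] (Fin N → ℝ))
    (hA : ∀ φ, A φ = φ + (Δt * M) • ((1 / 2 : ℝ) • Δh (Δh φ) + a • Δh φ +
      (α / 2) • φ + (1 / 4 : ℝ) • ((qbar * qbar) * φ)))
    (hsmall : Δt * M * (a ^ 2 - α) < 2) :
    (∀ φ : Fin N → ℝ, φ ≠ 0 → 0 < ip (A φ) φ) ∧ Function.Bijective A :=
  unique_solvability_of_scheme_general N w hw ip hip Δh hsym a α M Δt hM hΔt qbar A hA hsmall
end

section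
/- Let N be a positive natural number and V = Fin N → ℝ with weighted inner product ⟨f,g⟩ = w·Σ_i f i·g i (w > 0) and pointwise product *. Let Δh : V →ₗ[ℝ] V be symmetric and G = Δh∘Δh + 2a·Δh + α·id for reals a, α. Let Δt, C₀, rⁿ, rⁿ⁺¹ ∈ ℝ, M̄, ḡ, φⁿ, φⁿ⁺¹ ∈ V satisfy: μ = G((φⁿ+φⁿ⁺¹)/2) + (rⁿ + rⁿ⁺¹)·ḡ, φⁿ⁺¹ - φⁿ = -Δt·(M̄*μ), and rⁿ⁺¹ - rⁿ = ⟨ḡ, φⁿ⁺¹ - φⁿ⟩. Then the discrete energy Fᵏ = (1/2)⟨φᵏ,Gφᵏ⟩ + (rᵏ)² - C₀ satisfies Fⁿ⁺¹ - Fⁿ = -Δt·⟨μ, M̄*μ⟩; in particular Fⁿ⁺¹ ≤ Fⁿ when Δt ≥ 0 and M̄ is pointwise nonnegative (energy dissipation law of the fully discrete SAV scheme for the Allen–Cahn model, Scheme 4.2). -/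
/-- Energy dissipation law of the fully discrete SAV scheme for the
Allen–Cahn model (Scheme 4.2). -/
theorem discrete_energy_dissipation_AC_SAV
    (N : ℕ) (hN : 0 < N) (w : ℝ) (hw : 0 < w)
    (ip : (Fin N → ℝ) → (Fin N → ℝ) → ℝ)
    (hip : ∀ f g, ip f g = w * ∑ i, f i * g i)
    (Δh : (Fin N → ℝ) →ₗ[ℝ] (Fin N → ℝ))
    (hsym : ∀ f g, ip (Δh f) g = ip f (Δh g))
    (a α : ℝ) (G : (Fin N → ℝ) → (Fin N → ℝ))
    (hG : ∀ f, G f = Δh (Δh f) + (2 * a) • Δh f + α • f)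
    (Δt C₀ rn rn1 : ℝ) (Mbar gbar phin phin1 mu : Fin N → ℝ)
    (hmu : mu = G ((1 / 2 : ℝ) • (phin + phin1)) + (rn + rn1) • gbar)
    (hphi : phin1 - phin = (-Δt) • (Mbar * mu))
    (hr : rn1 - rn = ip gbar (phin1 - phin))
    (Fn Fn1 : ℝ)
    (hFn : Fn = (1 / 2) * ip phin (G phin) + rn ^ 2 - C₀)
    (hFn1 : Fn1 = (1 / 2) * ip phin1 (G phin1) + rn1 ^ 2 - C₀) :
    Fn1 - Fn = -Δt * ip mu (Mbar * mu) ∧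
    (0 ≤ Δt → (∀ i, 0 ≤ Mbar i) → Fn1 ≤ Fn) := by
  -- basic bilinearity facts
  have ipaddl : ∀ f g h : Fin N → ℝ, ip (f + g) h = ip f h + ip g h := by
    intro f g h
    simp [hip, add_mul, Finset.sum_add_distrib, mul_add]
  have ipsymm : ∀ f g : Fin N → ℝ, ip f g = ip g f := by
    intro f g; simp [hip, mul_comm]
  have ipaddr : ∀ f g h : Fin N → ℝ, ip f (g + h) = ip f g + ip f h := by
    intro f g h; rw [ipsymm, ipaddl, ipsymm g f, ipsymm h f]
  have ipsmull : ∀ (c : ℝ) (f g : Fin N → ℝ), ip (c • f) g = c * ip f g := by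
    intro c f g
    simp [hip, Finset.mul_sum, mul_assoc, mul_left_comm]
  have ipsmulr : ∀ (c : ℝ) (f g : Fin N → ℝ), ip f (c • g) = c * ip f g := by
    intro c f g; rw [ipsymm, ipsmull, ipsymm g f]
  -- symmetry of G
  have Gsym : ∀ f g : Fin N → ℝ, ip (G f) g = ip f (G g) := by
    intro f g
    simp only [hG, ipaddl, ipaddr, ipsmull, ipsmulr]
    rw [hsym, hsym, ← hsym f (Δh g), hsym f g]
  -- linearity of G
  have Gadd : ∀ f g : Fin N → ℝ, G (f + g) = G f + G g := by
    intro f g; simp [hG, map_add, smul_add]; abel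
  have Gsmul : ∀ (c : ℝ) (f : Fin N → ℝ), G (c • f) = c • G f := by
    intro c f
    simp [hG, map_smul, smul_smul, smul_add, mul_comm]
  set d := phin1 - phin with hd
  have hphin1 : phin1 = phin + d := by simp [hd]
  -- main identity : Fn1 - Fn = ip mu d
  have key : Fn1 - Fn = ip mu d := by
    have h1 : ip phin1 (G phin1) =
        ip phin (G phin) + 2 * ip (G phin) d + ip d (G d) := by
      rw [hphin1, Gadd, ipaddl, ipaddr, ipaddr]
      have e1 : ip phin (G d) = ip (G phin) d := by
        rw [Gsym, ipsymm]
      have e2 : ip d (G phin) = ip (G phin) d := ipsymm _ _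
      rw [e1, e2]; ring
    have hmu' : mu = G phin + (1 / 2 : ℝ) • G d + (rn + rn1) • gbar := by
      rw [hmu]
      have : (1 / 2 : ℝ) • (phin + phin1) = phin + (1 / 2 : ℝ) • d := by
        rw [hphin1]; ext i; simp; ring
      rw [this, Gadd, Gsmul]
    have h2 : ip mu d =
        ip (G phin) d + (1 / 2) * ip (G d) d + (rn + rn1) * ip gbar d := by
      rw [hmu', ipaddl, ipaddl, ipsmull, ipsmull]
    have h3 : ip (G d) d = ip d (G d) := ipsymm _ _
    have h4 : (rn + rn1) * ip gbar d = rn1 ^ 2 - rn ^ 2 := by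
      rw [← hr]; ring
    rw [hFn1, hFn, h1, h2, h3, h4]; ring
  have main : Fn1 - Fn = -Δt * ip mu (Mbar * mu) := by
    rw [key, hphi, ipsmulr]
  refine ⟨main, fun hΔt hM => ?_⟩
  have hnn : 0 ≤ ip mu (Mbar * mu) := by
    rw [hip]
    apply mul_nonneg hw.le
    apply Finset.sum_nonneg
    intro i _
    have : mu i * (Mbar * mu) i = Mbar i * mu i ^ 2 := by
      simp [Pi.mul_apply]; ring
    rw [this]
    exact mul_nonneg (hM i) (sq_nonneg _)
  nlinarith [main]
end

section
/- Let N be a positive natural number and V = Fin N → ℝ with weighted inner product ⟨f,g⟩ = w·Σ_i f i·g i (w > 0), pointwise product *, and constant-one function 𝟙. Let Δh : V →ₗ[ℝ] V be symmetric and G = Δh∘Δh + 2a·Δh + α·id for reals a, α. Let Δt, ζⁿ, ζⁿ⁺¹ ∈ ℝ, η ≥ 0, and M̄, q̄, φⁿ, φⁿ⁺¹, qⁿ, qⁿ⁺¹ ∈ V satisfy: μ̃ = G((φⁿ+φⁿ⁺¹)/2) + (1/2)·((qⁿ+qⁿ⁺¹)/2)*q̄ + √η·((ζⁿ+ζⁿ⁺¹)/2)·𝟙,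 φⁿ⁺¹ - φⁿ = -Δt·(M̄*μ̃), ζⁿ⁺¹ - ζⁿ = √η·⟨φⁿ⁺¹ - φⁿ, 𝟙⟩, and qⁿ⁺¹ - qⁿ = q̄*(φⁿ⁺¹ - φⁿ). Then the discrete energy Fᵏ = (1/2)⟨φᵏ,Gφᵏ⟩ + (1/4)⟨qᵏ,qᵏ⟩ + (1/2)(ζᵏ)² satisfies Fⁿ⁺¹ - Fⁿ = -Δt·⟨μ̃, M̄*μ̃⟩; in particular Fⁿ⁺¹ ≤ Fⁿ when Δt ≥ 0 and M̄ is pointwise nonnegative (energy dissipation law of the fully discrete EQ scheme for the Allen–Cahn model with a penalizing potential, Scheme 4.5). -/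
/-!
The scheme is a discrete gradient flow. Every part of the energy is a quadratic form, and a
quadratic form `Q` with symmetric polar form `B` satisfies
`Q φ₁ - Q φ₀ = 2 B (φ₁ - φ₀, (φ₀ + φ₁) / 2)`. The increments of `q` and `ζ` are themselves driven
by `φ₁ - φ₀`, so the whole energy increment is `⟨φ₁ - φ₀, μ̃⟩`, the midpoint chemical potential
paired with the step. Substituting `φ₁ - φ₀ = -Δt M̄ μ̃` turns this into `-Δt ⟨μ̃, M̄ μ̃⟩ ≤ 0`.
-/

section DotProduct

variable {ι R : Type*} [Fintype ι]

theorem mul_dotProduct_eq_dotProduct_mul [CommSemiring R] (u v x : ι → R) :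
    (u * v) ⬝ᵥ x = v ⬝ᵥ (u * x) :=
  Finset.sum_congr rfl fun i _ => by simp only [Pi.mul_apply]; ring

theorem dotProduct_mul_self_nonneg [CommRing R] [LinearOrder R] [IsOrderedRing R]
    {m : ι → R} (hm : 0 ≤ m) (μ : ι → R) : 0 ≤ μ ⬝ᵥ (m * μ) :=
  Finset.sum_nonneg fun i _ => by
    simpa only [Pi.mul_apply, mul_left_comm] using mul_nonneg (hm i) (mul_self_nonneg (μ i))

theorem dotProduct_map_self_sub_dotProduct_map_self [CommRing R]
    (T : (ι → R) →ₗ[R] (ι → R)) (hT : ∀ f g, T f ⬝ᵥ g = f ⬝ᵥ T g) (x y : ι → R) :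
    x ⬝ᵥ T x - y ⬝ᵥ T y = (x - y) ⬝ᵥ T (y + x) := by
  rw [map_add, sub_dotProduct, dotProduct_add, dotProduct_add, ← hT y x, dotProduct_comm (T y) x]
  ring

theorem dotProduct_symm_of_quadratic_in_symm [CommRing R]
    {T : (ι → R) →ₗ[R] (ι → R)} (hT : ∀ f g, T f ⬝ᵥ g = f ⬝ᵥ T g) (c d : R) (f g : ι → R) :
    let P : (ι → R) →ₗ[R] (ι → R) := T ∘ₗ T + c • T + d • LinearMap.id
    P f ⬝ᵥ g = f ⬝ᵥ P g := by
  simp only [LinearMap.add_apply, LinearMap.smul_apply, LinearMap.comp_apply, LinearMap.id_apply,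
    add_dotProduct, dotProduct_add, smul_dotProduct, dotProduct_smul, hT]

end DotProduct

section Energy

variable {ι : Type*} [Fintype ι]

def weightedInner (w : ℝ) (f g : ι → ℝ) : ℝ :=
  w * f ⬝ᵥ g

theorem weightedInner_smul_mul_left (w c : ℝ) (m f : ι → ℝ) :
    weightedInner w (c • (m * f)) f = c * weightedInner w f (m * f) := by
  rw [weightedInner, weightedInner, smul_dotProduct, dotProduct_comm, smul_eq_mul]
  ring

theorem weightedInner_mul_self_nonneg {w : ℝ} (hw : 0 ≤ w) {m : ι → ℝ} (hm : 0 ≤ m) (f : ι → ℝ) :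
    0 ≤ weightedInner w f (m * f) :=
  mul_nonneg hw (dotProduct_mul_self_nonneg hm f)

/-- The energy `Fᵏ` of the quadratized, mass-penalized scheme. -/
noncomputable def discreteEnergy (w : ℝ) (G : (ι → ℝ) → ι → ℝ) (φ q : ι → ℝ) (ζ : ℝ) : ℝ :=
  1 / 2 * weightedInner w φ (G φ) + 1 / 4 * weightedInner w q q + 1 / 2 * ζ ^ 2

theorem discreteEnergy_sub_eq_weightedInner_midpoint (w s : ℝ) (G : (ι → ℝ) →ₗ[ℝ] (ι → ℝ))
    (hG : ∀ f g, G f ⬝ᵥ g = f ⬝ᵥ G g) {φ₀ φ₁ q₀ q₁ qbar e : ι → ℝ} {ζ₀ ζ₁ : ℝ}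
    (hq : q₁ - q₀ = qbar * (φ₁ - φ₀)) (hζ : ζ₁ - ζ₀ = s * weightedInner w (φ₁ - φ₀) e) :
    discreteEnergy w G φ₁ q₁ ζ₁ - discreteEnergy w G φ₀ q₀ ζ₀ =
      weightedInner w (φ₁ - φ₀) (G ((1 / 2 : ℝ) • (φ₀ + φ₁)) +
        (1 / 2 : ℝ) • (((1 / 2 : ℝ) • (q₀ + q₁)) * qbar) + (s * ((ζ₀ + ζ₁) / 2)) • e) := by
  have hφ := dotProduct_map_self_sub_dotProduct_map_self G hG φ₁ φ₀
  have hqq : q₁ ⬝ᵥ q₁ - q₀ ⬝ᵥ q₀ = (φ₁ - φ₀) ⬝ᵥ (qbar * (q₀ + q₁)) := by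
    rw [← mul_dotProduct_eq_dotProduct_mul, ← hq]
    exact dotProduct_map_self_sub_dotProduct_map_self LinearMap.id (fun _ _ => rfl) q₁ q₀
  have hmid : ((1 / 2 : ℝ) • (q₀ + q₁)) * qbar = (1 / 2 : ℝ) • (qbar * (q₀ + q₁)) := by
    rw [smul_mul_assoc, mul_comm]
  unfold discreteEnergy weightedInner at *
  rw [hmid, map_smul]
  simp only [dotProduct_add, dotProduct_smul, smul_eq_mul]
  linear_combination (w / 2) * hφ + (w / 4) * hqq + ((ζ₀ + ζ₁) / 2) * hζ

end Energy

theorem discrete_energy_dissipation_AC_penalizing_EQ_general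
    (N : ℕ) (w : ℝ) (hw : 0 < w)
    (ip : (Fin N → ℝ) → (Fin N → ℝ) → ℝ)
    (hip : ∀ f g, ip f g = w * ∑ i, f i * g i)
    (one : Fin N → ℝ)
    (Δh : (Fin N → ℝ) →ₗ[ℝ] (Fin N → ℝ))
    (hsym : ∀ f g, ip (Δh f) g = ip f (Δh g))
    (a α : ℝ) (G : (Fin N → ℝ) → (Fin N → ℝ))
    (hG : ∀ f, G f = Δh (Δh f) + (2 * a) • Δh f + α • f)
    (Δt ζn ζn1 η : ℝ)
    (Mbar qbar phin phin1 qn qn1 mutilde : Fin N → ℝ)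
    (hmut : mutilde = G ((1 / 2 : ℝ) • (phin + phin1)) +
      (1 / 2 : ℝ) • (((1 / 2 : ℝ) • (qn + qn1)) * qbar) +
      (Real.sqrt η * ((ζn + ζn1) / 2)) • one)
    (hphi : phin1 - phin = (-Δt) • (Mbar * mutilde))
    (hζ : ζn1 - ζn = Real.sqrt η * ip (phin1 - phin) one)
    (hq : qn1 - qn = qbar * (phin1 - phin))
    (Fn Fn1 : ℝ)
    (hFn : Fn = (1 / 2) * ip phin (G phin) + (1 / 4) * ip qn qn +
      (1 / 2) * ζn ^ 2)
    (hFn1 : Fn1 = (1 / 2) * ip phin1 (G phin1) + (1 / 4) * ip qn1 qn1 +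
      (1 / 2) * ζn1 ^ 2) :
    Fn1 - Fn = -Δt * ip mutilde (Mbar * mutilde) ∧
    (0 ≤ Δt → (∀ i, 0 ≤ Mbar i) → Fn1 ≤ Fn) := by
  obtain rfl : ip = weightedInner w := funext fun f => funext fun g => hip f g
  have hΔh : ∀ f g, Δh f ⬝ᵥ g = f ⬝ᵥ Δh g := fun f g => mul_left_cancel₀ hw.ne' (hsym f g)
  set L : (Fin N → ℝ) →ₗ[ℝ] (Fin N → ℝ) := Δh ∘ₗ Δh + (2 * a) • Δh + α • LinearMap.id
  obtain rfl : G = L := funext fun f => by simp [L, hG]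
  have hstep : Fn1 - Fn = weightedInner w (phin1 - phin) mutilde := by
    rw [hFn, hFn1, hmut]
    exact discreteEnergy_sub_eq_weightedInner_midpoint w _ _
      (dotProduct_symm_of_quadratic_in_symm hΔh (2 * a) α) hq hζ
  have hdissipation : Fn1 - Fn = -Δt * weightedInner w mutilde (Mbar * mutilde) := by
    rw [hstep, hphi, weightedInner_smul_mul_left]
  refine ⟨hdissipation, fun hΔt hMbar => ?_⟩
  have hpos := weightedInner_mul_self_nonneg hw.le hMbar mutilde
  linarith [mul_nonneg hΔt hpos]

/-- Energy dissipation law of the fully discrete EQ scheme for the Allen–Cahn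
model with a penalizing potential (Scheme 4.5). -/
theorem discrete_energy_dissipation_AC_penalizing_EQ
    (N : ℕ) (hN : 0 < N) (w : ℝ) (hw : 0 < w)
    (ip : (Fin N → ℝ) → (Fin N → ℝ) → ℝ)
    (hip : ∀ f g, ip f g = w * ∑ i, f i * g i)
    (one : Fin N → ℝ) (hone : one = fun _ => 1)
    (Δh : (Fin N → ℝ) →ₗ[ℝ] (Fin N → ℝ))
    (hsym : ∀ f g, ip (Δh f) g = ip f (Δh g))
    (a α : ℝ) (G : (Fin N → ℝ) → (Fin N → ℝ))
    (hG : ∀ f, G f = Δh (Δh f) + (2 * a) • Δh f + α • f)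
    (Δt ζn ζn1 η : ℝ) (hη : 0 ≤ η)
    (Mbar qbar phin phin1 qn qn1 mutilde : Fin N → ℝ)
    (hmut : mutilde = G ((1 / 2 : ℝ) • (phin + phin1)) +
      (1 / 2 : ℝ) • (((1 / 2 : ℝ) • (qn + qn1)) * qbar) +
      (Real.sqrt η * ((ζn + ζn1) / 2)) • one)
    (hphi : phin1 - phin = (-Δt) • (Mbar * mutilde))
    (hζ : ζn1 - ζn = Real.sqrt η * ip (phin1 - phin) one)
    (hq : qn1 - qn = qbar * (phin1 - phin))
    (Fn Fn1 : ℝ)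
    (hFn : Fn = (1 / 2) * ip phin (G phin) + (1 / 4) * ip qn qn +
      (1 / 2) * ζn ^ 2)
    (hFn1 : Fn1 = (1 / 2) * ip phin1 (G phin1) + (1 / 4) * ip qn1 qn1 +
      (1 / 2) * ζn1 ^ 2) :
    Fn1 - Fn = -Δt * ip mutilde (Mbar * mutilde) ∧
    (0 ≤ Δt → (∀ i, 0 ≤ Mbar i) → Fn1 ≤ Fn) :=
  discrete_energy_dissipation_AC_penalizing_EQ_general N w hw ip hip one Δh hsym a α G hG Δt ζn ζn1
    η Mbar qbar phin phin1 qn qn1 mutilde hmut hphi hζ hq Fn Fn1 hFn hFn1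
end
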